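/- Let F ⊆ R⟨X⟩ be a set of polynomials, DM a function selecting divisor monomials (DM(g) ⊆ supp(g) for each g ∈ F), and f ∈ R⟨X⟩ a polynomial such that f →*_{F,DM} 0. Then, for all labelled quivers Q with labels in X such that f, every element of F, and DM are compatible with Q, and for all representations of Q consistent with its labelling in which all realizations of all elements of F are the zero map, all realizations of f are the zero map (i.e., φ_{u,v}(f) = 0 for every (u,v) ∈ σ(f)). -/

import Mathlib

open scoped BigOperators

universe u₁ u₂ u₃ u₄ u₅

/-- A labelled quiver: a directed multigraph with edges labelled in `X`. -/
structure LQuiver (V : Type u₁) (E : Type u₂) (X : Type u₃) where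
  src : E → V
  tgt : E → V
  lab : E → X

namespace LQuiver

variable {V : Type u₁} {E : Type u₂} {X : Type u₃}

/-- Paths in the quiver (possibly empty). -/
inductive Walk (Q : LQuiver V E X) : V → V → Type (max u₁ u₂)
  | nil (v : V) : Walk Q v v
  | cons {u : V} (e : E) (p : Walk Q u (Q.src e)) : Walk Q u (Q.tgt e)

/-- The label of a path, a word in the free monoid `⟨X⟩`. -/
def wlabel (Q : LQuiver V E X) : ∀ {u v : V}, Q.Walk u v → FreeMonoid X
  | _, _, .nil _ => 1
  | _, _, .cons e p => FreeMonoid.of (Q.lab e) * Q.wlabel p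

/-- The signature `σ(m)` of a monomial (word) `m`. -/
def sigW (Q : LQuiver V E X) (m : FreeMonoid X) : Set (V × V) :=
  {p : V × V | ∃ w : Q.Walk p.1 p.2, Q.wlabel w = m}

variable {R : Type u₄} [CommRing R]

/-- The signature `σ(f)` of a noncommutative polynomial `f ∈ R⟨X⟩`. -/
def sig (Q : LQuiver V E X) (f : MonoidAlgebra R (FreeMonoid X)) : Set (V × V) :=
  ⋂ m ∈ f.coeff.support, Q.sigW m

/-- A polynomial is compatible with `Q` if its signature is nonempty. -/
def Compatible (Q : LQuiver V E X) (f : MonoidAlgebra R (FreeMonoid X)) : Prop :=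
  (Q.sig f).Nonempty

/-- The projection `s(f)` of `σ(f)` on sources. -/
def srcSet (Q : LQuiver V E X) (f : MonoidAlgebra R (FreeMonoid X)) : Set V :=
  Prod.fst '' Q.sig f

/-- The projection `t(f)` of `σ(f)` on targets. -/
def tgtSet (Q : LQuiver V E X) (f : MonoidAlgebra R (FreeMonoid X)) : Set V :=
  Prod.snd '' Q.sig f

/-- `f` is a `Q`-consequence of `F`. -/
def QConsequence (Q : LQuiver V E X) (F : Set (MonoidAlgebra R (FreeMonoid X)))
    (f : MonoidAlgebra R (FreeMonoid X)) : Prop :=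
  Q.Compatible f ∧
  ∃ (n : ℕ) (g a b : Fin n → MonoidAlgebra R (FreeMonoid X)),
    (∀ i, g i ∈ F) ∧
    f = ∑ i, a i * g i * b i ∧
    ∀ uv ∈ Q.sig f, ∀ i, ∃ ui vi : V,
      (uv.1, ui) ∈ Q.sig (b i) ∧ (ui, vi) ∈ Q.sig (g i) ∧ (vi, uv.2) ∈ Q.sig (a i)

end LQuiver

/-- The monomial `m` regarded as a polynomial in `R⟨X⟩`. -/
noncomputable def mono (R : Type u₄) [CommRing R] {X : Type u₃} (m : FreeMonoid X) :
    MonoidAlgebra R (FreeMonoid X) :=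
  MonoidAlgebra.single m 1

/-- One rewriting step with divisor monomials selected by `DM`. -/
def RewriteStep {R : Type u₄} [CommRing R] {X : Type u₃}
    (G : Set (MonoidAlgebra R (FreeMonoid X)))
    (DM : MonoidAlgebra R (FreeMonoid X) → Set (FreeMonoid X))
    (f h : MonoidAlgebra R (FreeMonoid X)) : Prop :=
  ∃ g ∈ G, ∃ m ∈ DM g, ∃ a b : FreeMonoid X, ∃ lam : R,
    a * m * b ∈ f.coeff.support ∧ h = f + lam • (mono R a * g * mono R b)

/-- A monomial order: a well-founded linear order compatible with multiplication. -/
def IsMonomialOrder {X : Type u₃} (ord : LinearOrder (FreeMonoid X)) : Prop :=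
  WellFounded ord.lt ∧
    ∀ a b m m' : FreeMonoid X, ord.le m m' → ord.le (a * m * b) (a * m' * b)

/-- The leading monomial of a polynomial w.r.t. a linear order on monomials
(defined as `1` for the zero polynomial). -/
noncomputable def LM {K : Type u₄} [CommRing K] {X : Type u₃}
    (ord : LinearOrder (FreeMonoid X)) (f : MonoidAlgebra K (FreeMonoid X)) : FreeMonoid X :=
  letI := ord
  letI : Decidable (f = 0) := Classical.dec _
  if h : f = 0 then 1 else f.coeff.support.max'
    (Finsupp.support_nonempty_iff.mpr (fun h' => h (MonoidAlgebra.coeff_eq_zero.mp h')))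

/-- One step of standard polynomial reduction w.r.t. a set `G` and a monomial order. -/
def ReduceStep {K : Type u₄} [Field K] {X : Type u₃} (ord : LinearOrder (FreeMonoid X))
    (G : Set (MonoidAlgebra K (FreeMonoid X)))
    (f h : MonoidAlgebra K (FreeMonoid X)) : Prop :=
  ∃ g ∈ G, g ≠ 0 ∧ ∃ a b : FreeMonoid X,
    a * LM ord g * b ∈ f.coeff.support ∧
    h = f - (f.coeff (a * LM ord g * b) / g.coeff (LM ord g)) • (mono K a * g * mono K b)

/-- `f` is `Q`-order compatible w.r.t. the order `ord`. -/
def QOrderCompatible {V : Type u₁} {E : Type u₂} {X : Type u₃} {K : Type u₄} [CommRing K]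
    (Q : LQuiver V E X) (ord : LinearOrder (FreeMonoid X))
    (f : MonoidAlgebra K (FreeMonoid X)) : Prop :=
  Q.Compatible f ∧ Q.sigW (LM ord f) = Q.sig f

/-- A representation of a labelled quiver. -/
structure QRep (R : Type u₄) [CommRing R] {V : Type u₁} {E : Type u₂} {X : Type u₃}
    (Q : LQuiver V E X) where
  M : V → Type u₅
  [addcg : ∀ v, AddCommGroup (M v)]
  [mod : ∀ v, Module R (M v)]
  φ : (e : E) → M (Q.src e) →ₗ[R] M (Q.tgt e)

attribute [instance] QRep.addcg QRep.mod

namespace QRep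

variable {R : Type u₄} [CommRing R] {V : Type u₁} {E : Type u₂} {X : Type u₃}
  {Q : LQuiver V E X}

/-- The linear map induced by a path. -/
def walkMap (ρ : QRep R Q) : ∀ {u v : V}, Q.Walk u v → (ρ.M u →ₗ[R] ρ.M v)
  | _, _, .nil _ => LinearMap.id
  | _, _, .cons e p => (ρ.φ e).comp (ρ.walkMap p)

/-- The representation is consistent with the labelling: two paths with the same
source, target and label induce the same linear map. -/
def Consistent (ρ : QRep R Q) : Prop :=
  ∀ (u v : V) (p q : Q.Walk u v), Q.wlabel p = Q.wlabel q → ρ.walkMap p = ρ.walkMap q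

/-- The realization `φ_{v,w}(f)` of a polynomial `f` (for a consistent representation and
`(v,w) ∈ σ(f)`, this is the well-defined linear map of the paper). -/
noncomputable def real (ρ : QRep R Q) (v w : V) (f : MonoidAlgebra R (FreeMonoid X)) :
    ρ.M v →ₗ[R] ρ.M w :=
  ∑ m ∈ f.coeff.support, f.coeff m •
    (letI : Decidable (∃ p : Q.Walk v w, Q.wlabel p = m) := Classical.dec _
     if h : ∃ p : Q.Walk v w, Q.wlabel p = m then ρ.walkMap h.choose else 0)

end QRep


/-! Along a rewriting chain `f = f₀ → f₁ → ⋯ → 0`, each step adds `λ • a * g * b` where `a * m * b`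
is a monomial of `fᵢ` and `σ(m) = σ(g)`. For `(u, v) ∈ σ(fᵢ)`, a path from `u` to `v` labelled
`a * m * b` splits into paths labelled `b`, `m`, `a` through vertices `z₀`, `z₁`, and
`(z₀, z₁) ∈ σ(m) = σ(g)`. Hence every monomial of `a * g * b` labels a path from `u` to `v`, so
`(u, v) ∈ σ(fᵢ₊₁)`, and by consistency `φ_{u,v}(a * g * b) = φ(a) ∘ φ_{z₀,z₁}(g) ∘ φ(b) = 0`.
So `φ_{u,v}` takes the same value on the whole chain, namely `φ_{u,v}(0) = 0`. -/

open MonoidAlgebra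

namespace LQuiver

variable {V : Type u₁} {E : Type u₂} {X : Type u₃} {Q : LQuiver V E X}

def Walk.comp {u : V} : ∀ {w v : V}, Q.Walk u w → Q.Walk w v → Q.Walk u v
  | _, _, p, .nil _ => p
  | _, _, p, .cons e q => .cons e (p.comp q)

@[simp]
lemma wlabel_comp {u : V} : ∀ {w v : V} (p : Q.Walk u w) (q : Q.Walk w v),
    Q.wlabel (p.comp q) = Q.wlabel q * Q.wlabel p
  | _, _, _, .nil _ => by simp [Walk.comp, wlabel]
  | _, _, p, .cons e q => by simp [Walk.comp, wlabel, wlabel_comp p q, mul_assoc]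

lemma exists_comp_of_wlabel_eq_mul : ∀ {u v : V} (w : Q.Walk u v) {x y : FreeMonoid X},
    Q.wlabel w = x * y →
      ∃ (z : V) (p : Q.Walk u z) (q : Q.Walk z v), Q.wlabel p = y ∧ Q.wlabel q = x
  | _, _, .nil v, x, y, h => by
      have hlen := congrArg FreeMonoid.length h
      simp only [wlabel, FreeMonoid.length_one, FreeMonoid.length_mul] at hlen
      obtain ⟨rfl, rfl⟩ : x = 1 ∧ y = 1 :=
        ⟨FreeMonoid.length_eq_zero.mp (by omega), FreeMonoid.length_eq_zero.mp (by omega)⟩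
      exact ⟨v, .nil v, .nil v, by simp [wlabel], by simp [wlabel]⟩
  | _, _, .cons e w, x, y, h => by
      induction x using FreeMonoid.casesOn with
      | one => exact ⟨_, .cons e w, .nil _, by rw [h, one_mul], by simp [wlabel]⟩
      | of_mul c x =>
        have hlist := congrArg FreeMonoid.toList h
        simp only [wlabel, mul_assoc, FreeMonoid.toList_of_mul, List.cons.injEq] at hlist
        obtain ⟨z, p, q, hp, hq⟩ :=
          exists_comp_of_wlabel_eq_mul w (FreeMonoid.toList.injective hlist.2)
        exact ⟨z, p, .cons e q, hp, by simp [wlabel, hq, hlist.1]⟩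

lemma mem_sigW_mul_iff {x y : FreeMonoid X} {u v : V} :
    (u, v) ∈ Q.sigW (x * y) ↔ ∃ z, (u, z) ∈ Q.sigW y ∧ (z, v) ∈ Q.sigW x := by
  constructor
  · rintro ⟨w, hw⟩
    obtain ⟨z, p, q, hp, hq⟩ := exists_comp_of_wlabel_eq_mul w hw
    exact ⟨z, ⟨p, hp⟩, ⟨q, hq⟩⟩
  · rintro ⟨z, ⟨p, hp⟩, ⟨q, hq⟩⟩
    exact ⟨p.comp q, by simp [hp, hq]⟩

variable {R : Type u₄} [CommRing R]

lemma mem_sig_iff {f : MonoidAlgebra R (FreeMonoid X)} {uv : V × V} :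
    uv ∈ Q.sig f ↔ ∀ m ∈ f.coeff.support, uv ∈ Q.sigW m :=
  Set.mem_iInter₂

lemma sig_inter_subset_sig_add (f g : MonoidAlgebra R (FreeMonoid X)) :
    Q.sig f ∩ Q.sig g ⊆ Q.sig (f + g) := by
  classical
  rintro uv ⟨hf, hg⟩
  refine mem_sig_iff.mpr fun m hm => ?_
  rcases Finset.mem_union.mp (Finsupp.support_add hm) with hm | hm
  exacts [mem_sig_iff.mp hf m hm, mem_sig_iff.mp hg m hm]

lemma sig_subset_sig_smul (c : R) (f : MonoidAlgebra R (FreeMonoid X)) :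
    Q.sig f ⊆ Q.sig (c • f) :=
  fun _ hf => mem_sig_iff.mpr fun m hm => mem_sig_iff.mp hf m (Finsupp.support_smul hm)

lemma mem_sig_mono_mul_mul {a b : FreeMonoid X} {g : MonoidAlgebra R (FreeMonoid X)}
    {u z₀ z₁ v : V} (hb : (u, z₀) ∈ Q.sigW b) (hg : (z₀, z₁) ∈ Q.sig g)
    (ha : (z₁, v) ∈ Q.sigW a) : (u, v) ∈ Q.sig (mono R a * g * mono R b) := by
  classical
  refine mem_sig_iff.mpr fun n hn => ?_
  obtain ⟨n', hn', rfl⟩ := Finset.mem_image.mp (support_coeff_mul_single_subset _ _ _ hn)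
  obtain ⟨m, hm, rfl⟩ := Finset.mem_image.mp (support_coeff_single_mul_subset _ _ _ hn')
  exact mem_sigW_mul_iff.mpr ⟨z₀, hb, mem_sigW_mul_iff.mpr ⟨z₁, mem_sig_iff.mp hg m hm, ha⟩⟩

end LQuiver

lemma mono_mul_mul_eq_sum {R : Type u₄} [CommRing R] {X : Type u₃} (a b : FreeMonoid X)
    (g : MonoidAlgebra R (FreeMonoid X)) :
    mono R a * g * mono R b = ∑ m ∈ g.coeff.support, single (a * m * b) (g.coeff m) := by
  conv_lhs => rw [← sum_coeff_single g, Finsupp.sum, Finset.mul_sum, Finset.sum_mul]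
  simp only [mono, single_mul_single, one_mul, mul_one]

namespace QRep

variable {R : Type u₄} [CommRing R] {V : Type u₁} {E : Type u₂} {X : Type u₃}
  {Q : LQuiver V E X} (ρ : QRep R Q)

lemma walkMap_comp {u : V} : ∀ {w v : V} (p : Q.Walk u w) (q : Q.Walk w v),
    ρ.walkMap (p.comp q) = ρ.walkMap q ∘ₗ ρ.walkMap p
  | _, _, _, .nil _ => by simp [LQuiver.Walk.comp, walkMap]
  | _, _, p, .cons e q => by
      simp only [LQuiver.Walk.comp, walkMap, walkMap_comp p q, LinearMap.comp_assoc]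

noncomputable def realW (v w : V) (m : FreeMonoid X) : ρ.M v →ₗ[R] ρ.M w :=
  letI : Decidable (∃ p : Q.Walk v w, Q.wlabel p = m) := Classical.dec _
  if h : ∃ p : Q.Walk v w, Q.wlabel p = m then ρ.walkMap h.choose else 0

lemma real_eq_linearCombination (v w : V) (f : MonoidAlgebra R (FreeMonoid X)) :
    ρ.real v w f = Finsupp.linearCombination R (ρ.realW v w) f.coeff :=
  rfl

lemma real_eq_sum (v w : V) (f : MonoidAlgebra R (FreeMonoid X)) :
    ρ.real v w f = ∑ m ∈ f.coeff.support, f.coeff m • ρ.realW v w m :=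
  rfl

lemma real_add (v w : V) (f g : MonoidAlgebra R (FreeMonoid X)) :
    ρ.real v w (f + g) = ρ.real v w f + ρ.real v w g := by
  simp [real_eq_linearCombination, coeff_add]

lemma real_smul (v w : V) (c : R) (f : MonoidAlgebra R (FreeMonoid X)) :
    ρ.real v w (c • f) = c • ρ.real v w f := by
  simp [real_eq_linearCombination, coeff_smul]

variable {ρ}

lemma realW_wlabel (hρ : ρ.Consistent) {v w : V} (p : Q.Walk v w) :
    ρ.realW v w (Q.wlabel p) = ρ.walkMap p := by
  have h : ∃ q : Q.Walk v w, Q.wlabel q = Q.wlabel p := ⟨p, rfl⟩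
  rw [realW, dif_pos h]
  exact hρ v w _ p h.choose_spec

lemma realW_mul (hρ : ρ.Consistent) {x y : FreeMonoid X} {u z v : V}
    (hy : (u, z) ∈ Q.sigW y) (hx : (z, v) ∈ Q.sigW x) :
    ρ.realW u v (x * y) = ρ.realW z v x ∘ₗ ρ.realW u z y := by
  obtain ⟨p, rfl⟩ := hy
  obtain ⟨q, rfl⟩ := hx
  rw [← LQuiver.wlabel_comp, realW_wlabel hρ, realW_wlabel hρ, realW_wlabel hρ, walkMap_comp]

lemma real_mono_mul_mul (hρ : ρ.Consistent) {a b : FreeMonoid X}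
    {g : MonoidAlgebra R (FreeMonoid X)} {u z₀ z₁ v : V} (hb : (u, z₀) ∈ Q.sigW b)
    (hg : (z₀, z₁) ∈ Q.sig g) (ha : (z₁, v) ∈ Q.sigW a) :
    ρ.real u v (mono R a * g * mono R b)
      = ρ.realW z₁ v a ∘ₗ ρ.real z₀ z₁ g ∘ₗ ρ.realW u z₀ b := by
  classical
  have hterm : ∀ m ∈ g.coeff.support, ρ.realW u v (a * m * b)
      = ρ.realW z₁ v a ∘ₗ ρ.realW z₀ z₁ m ∘ₗ ρ.realW u z₀ b := fun m hm => by
    have hm' := LQuiver.mem_sig_iff.mp hg m hm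
    rw [realW_mul hρ hb (LQuiver.mem_sigW_mul_iff.mpr ⟨z₁, hm', ha⟩), realW_mul hρ hm' ha,
      LinearMap.comp_assoc]
  rw [mono_mul_mul_eq_sum, real_eq_linearCombination, coeff_sum, map_sum, real_eq_sum]
  ext x
  simp only [coeff_single, Finsupp.linearCombination_single, LinearMap.sum_apply,
    LinearMap.comp_apply, LinearMap.smul_apply, map_sum, map_smul]
  refine Finset.sum_congr rfl fun m hm => ?_
  rw [hterm m hm, LinearMap.comp_apply, LinearMap.comp_apply]

end QRep

theorem RewriteStep.mem_sig_and_real_eq {V : Type u₁} {E : Type u₂} {X : Type u₃}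
    {R : Type u₄} [CommRing R] {Q : LQuiver V E X} {F : Set (MonoidAlgebra R (FreeMonoid X))}
    {DM : MonoidAlgebra R (FreeMonoid X) → Set (FreeMonoid X)}
    (hDM : ∀ g ∈ F, ∀ m ∈ DM g, Q.sigW m = Q.sig g) {ρ : QRep R Q} (hρ : ρ.Consistent)
    (hF : ∀ g ∈ F, ∀ uv ∈ Q.sig g, ρ.real uv.1 uv.2 g = 0)
    {f h : MonoidAlgebra R (FreeMonoid X)} (hstep : RewriteStep F DM f h)
    {uv : V × V} (huv : uv ∈ Q.sig f) :
    uv ∈ Q.sig h ∧ ρ.real uv.1 uv.2 h = ρ.real uv.1 uv.2 f := by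
  obtain ⟨g, hgF, m, hm, a, b, c, hamb, rfl⟩ := hstep
  obtain ⟨z₁, hmb, ha⟩ := LQuiver.mem_sigW_mul_iff.mp
    (by simpa only [mul_assoc] using LQuiver.mem_sig_iff.mp huv _ hamb)
  obtain ⟨z₀, hb, hm'⟩ := LQuiver.mem_sigW_mul_iff.mp hmb
  have hg : (z₀, z₁) ∈ Q.sig g := hDM g hgF m hm ▸ hm'
  refine ⟨LQuiver.sig_inter_subset_sig_add _ _ ⟨huv, LQuiver.sig_subset_sig_smul _ _
    (LQuiver.mem_sig_mono_mul_mul hb hg ha)⟩, ?_⟩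
  rw [QRep.real_add, QRep.real_smul, QRep.real_mono_mul_mul hρ hb hg ha, hF g hgF _ hg]
  simp

theorem prove_identities_general {X R : Type*} [CommRing R]
    (F : Set (MonoidAlgebra R (FreeMonoid X)))
    (DM : MonoidAlgebra R (FreeMonoid X) → Set (FreeMonoid X))
    (f : MonoidAlgebra R (FreeMonoid X))
    (hred : Relation.ReflTransGen (RewriteStep F DM) f 0) :
    ∀ {V E : Type*} (Q : LQuiver V E X),
      Q.Compatible f →
      (∀ g ∈ F, Q.Compatible g) →
      (∀ g ∈ F, ∀ m ∈ DM g, Q.sigW m = Q.sig g) →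
      ∀ ρ : QRep R Q, ρ.Consistent →
        (∀ g ∈ F, ∀ uv ∈ Q.sig g, ρ.real uv.1 uv.2 g = 0) →
        ∀ uv ∈ Q.sig f, ρ.real uv.1 uv.2 f = 0 := by
  rintro V E Q - - hDM ρ hρ hF uv huv
  induction hred using Relation.ReflTransGen.head_induction_on with
  | refl => simp [QRep.real]
  | head hstep _ ih =>
    obtain ⟨huv', hreal⟩ := hstep.mem_sig_and_real_eq hDM hρ hF huv
    exact hreal ▸ ih huv'

/-- if `f →*_{F,DM} 0`, then for every quiver with which `f`, `F` and `DM`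
are compatible and every consistent representation annihilating `F`, all realizations of
`f` vanish. -/
theorem prove_identities {X R : Type*} [CommRing R]
    (F : Set (MonoidAlgebra R (FreeMonoid X)))
    (DM : MonoidAlgebra R (FreeMonoid X) → Set (FreeMonoid X))
    (hDM : ∀ g ∈ F, DM g ⊆ (g.coeff.support : Set (FreeMonoid X)))
    (f : MonoidAlgebra R (FreeMonoid X))
    (hred : Relation.ReflTransGen (RewriteStep F DM) f 0) :
    ∀ {V E : Type*} (Q : LQuiver V E X),
      Q.Compatible f →
      (∀ g ∈ F, Q.Compatible g) →
      (∀ g ∈ F, ∀ m ∈ DM g, Q.sigW m = Q.sig g) →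
      ∀ ρ : QRep R Q, ρ.Consistent →
        (∀ g ∈ F, ∀ uv ∈ Q.sig g, ρ.real uv.1 uv.2 g = 0) →
        ∀ uv ∈ Q.sig f, ρ.real uv.1 uv.2 f = 0 :=
  prove_identities_general F DM f hred
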